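/- arXiv:2409.16875 — 6 statements merged into one kernel-verified Lean document; each statement's English description precedes it below -/
import Mathlib

section
/- Fix n ≥ 2 and K ≥ 1. Let S ∈ ℝ^{(n−1)×n} be a fixed matrix, and for each i ∈ {1,…,K} let θ_i ∈ ℝ^n and b_i ∈ ℝ, where all b_i are nonzero and of the same sign. Define Â_i ∈ ℝ^{n×n} as the matrix whose first n−1 rows are the rows of S and whose last row is θ_iᵀ; define F_i = diag(1,…,1, −1/b_i) ∈ ℝ^{n×n}; and for a validity vector α ∈ ℝ^K define Γ(α) = diag(1,…,1, −1/(Σ_{i=1}^K α_i b_i)) ∈ ℝ^{n×n}. Then for every validity vector α there exists a validity vector β ∈ ℝ^K such that Γ(α) · (Σ_{i=1}^K α_i Â_i) = Σ_{i=1}^K β_i (F_i Â_i). -/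
open Matrix Finset

/-- A validity vector: convex weights. -/
def IsValidity {K : ℕ} (α : Fin K → ℝ) : Prop :=
  (∑ i, α i = 1) ∧ ∀ i, 0 ≤ α i ∧ α i ≤ 1

/-- The matrix whose first `n-1` rows are those of `S` and whose last row is `θᵀ`. -/
def lastRowMat (n : ℕ) (S : Matrix (Fin (n - 1)) (Fin n) ℝ) (θ : Fin n → ℝ) :
    Matrix (Fin n) (Fin n) ℝ :=
  Matrix.of fun r c => if h : (r : ℕ) < n - 1 then S ⟨r, h⟩ c else θ c

/-- `diag(1, …, 1, c)`: diagonal matrix with ones except `c` in the last entry. -/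
def lastDiag (n : ℕ) (c : ℝ) : Matrix (Fin n) (Fin n) ℝ :=
  Matrix.diagonal fun j => if (j : ℕ) = n - 1 then c else 1

/-- Validity transformation at the matrix level: `Γ(α) · (∑ αᵢ Âᵢ) = ∑ βᵢ (Fᵢ Âᵢ)`
for some validity vector `β`. -/
theorem validity_transformation_matrix (n K : ℕ) (hn : 2 ≤ n) (hK : 1 ≤ K)
    (S : Matrix (Fin (n - 1)) (Fin n) ℝ) (θ : Fin K → Fin n → ℝ)
    (b : Fin K → ℝ) (hb : ∀ i, b i ≠ 0)
    (hsign : (∀ i, 0 < b i) ∨ (∀ i, b i < 0)) :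
    ∀ α : Fin K → ℝ, IsValidity α →
      ∃ β : Fin K → ℝ, IsValidity β ∧
        lastDiag n (-1 / ∑ i, α i * b i) * (∑ i, α i • lastRowMat n S (θ i))
          = ∑ i, β i • (lastDiag n (-1 / b i) * lastRowMat n S (θ i)) := by
  intro α ⟨hsum, hα⟩
  set T : ℝ := ∑ i, α i * b i with hT
  have hex : ∃ i, 0 < α i := by
    by_contra h
    push_neg at h
    have : ∀ i, α i = 0 := fun i => le_antisymm (h i) (hα i).1
    simp [this] at hsum
  obtain ⟨j, hj⟩ := hex
  have hTpos : (∀ i, 0 < b i) → 0 < T := by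
    intro hpos
    exact Finset.sum_pos' (fun i _ => mul_nonneg (hα i).1 (hpos i).le)
      ⟨j, Finset.mem_univ j, mul_pos hj (hpos j)⟩
  have hTneg : (∀ i, b i < 0) → T < 0 := by
    intro hneg
    have : 0 < ∑ i, α i * (-(b i)) :=
      Finset.sum_pos' (fun i _ => mul_nonneg (hα i).1 (neg_pos.mpr (hneg i)).le)
        ⟨j, Finset.mem_univ j, mul_pos hj (neg_pos.mpr (hneg j))⟩
    simp only [mul_neg, Finset.sum_neg_distrib] at this
    linarith [this]
  have hTne : T ≠ 0 := by
    rcases hsign with h | h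
    · exact (hTpos h).ne'
    · exact (hTneg h).ne
  have hβnn : ∀ i, 0 ≤ α i * b i / T := by
    intro i
    rcases hsign with h | h
    · exact div_nonneg (mul_nonneg (hα i).1 (h i).le) (hTpos h).le
    · exact div_nonneg_of_nonpos (mul_nonpos_of_nonneg_of_nonpos (hα i).1 (h i).le)
        (hTneg h).le
  have hβsum : ∑ i, α i * b i / T = 1 := by
    rw [← Finset.sum_div, ← hT, div_self hTne]
  refine ⟨fun i => α i * b i / T, ⟨hβsum, fun i => ⟨hβnn i, ?_⟩⟩, ?_⟩
  · calc α i * b i / T ≤ ∑ k, α k * b k / T :=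
          Finset.single_le_sum (fun k _ => hβnn k) (Finset.mem_univ i)
      _ = 1 := hβsum
  · ext r c
    simp only [Matrix.mul_apply, lastDiag, lastRowMat, Matrix.sum_apply,
      Matrix.smul_apply, Matrix.diagonal_apply, smul_eq_mul, Matrix.of_apply]
    rw [Finset.sum_eq_single r (fun k _ hk => by simp [Ne.symm hk]) (by simp)]
    simp only [if_pos rfl]
    by_cases hr : (r : ℕ) = n - 1
    · have hrlt : ¬ (r : ℕ) < n - 1 := by omega
      simp only [if_pos hr, if_true, dif_neg hrlt]
      rw [Finset.mul_sum]
      refine Finset.sum_congr rfl fun i _ => ?_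
      rw [Finset.sum_eq_single r (fun k _ hk => by simp [Ne.symm hk]) (by simp)]
      simp only [if_pos rfl, if_pos hr, dif_neg hrlt, if_true]
      rw [show α i * b i / T * (-1 / b i * θ i c)
            = (b i / b i) * (-1 / T * (α i * θ i c)) by ring,
        div_self (hb i), one_mul]
    · have hrlt : (r : ℕ) < n - 1 := by omega
      simp only [if_neg hr, if_true, dif_pos hrlt, one_mul]
      have key : ∀ i : Fin K,
          (α i * b i / T) * (∑ k : Fin n, (if r = k then (1:ℝ) else 0) *
            (if h : (k : ℕ) < n - 1 then S ⟨k, h⟩ c else θ i c))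
          = (α i * b i / T) * S ⟨r, hrlt⟩ c := by
        intro i
        congr 1
        rw [Finset.sum_eq_single r (fun k _ hk => by simp [Ne.symm hk]) (by simp)]
        simp [hrlt]
      rw [Finset.sum_congr rfl (fun i _ => key i)]
      rw [← Finset.sum_mul, ← Finset.sum_mul, hβsum, hsum]
end

section
/- Fix n ≥ 2 and K ≥ 1. Let S ∈ ℝ^{(n−1)×n} be a fixed matrix, and for each i ∈ {1,…,K} let θ_i ∈ ℝ^n and b_i ∈ ℝ, where all b_i are nonzero and of the same sign. Define Â_i ∈ ℝ^{n×n} as the matrix whose first n−1 rows are the rows of S and whose last row is θ_iᵀ; define F_i = diag(1,…,1, −1/b_i); and for a validity vector α define Γ(α) = diag(1,…,1, −1/(Σ_{i=1}^K α_i b_i)). Suppose there exists a symmetric positive definite matrix P ∈ ℝ^{n×n} such that P − (F_i Â_i)ᵀ P (F_i Â_i) is positive definite for every i ∈ {1,…,K}. Then for every sequence of validity vectors (α_k)_{k∈ℕ} and every initial state x_0 ∈ ℝ^n, the sequence defined by x_{k+1} = Γ(α_k) · (Σ_{i=1}^K α_{k,i} Â_i) · x_k converges to 0 as k → ∞. 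-/
open Matrix Finset Filter

lemma convex_decomp (n K : ℕ) (S : Matrix (Fin (n-1)) (Fin n) ℝ) (θ : Fin K → Fin n → ℝ)
    (b : Fin K → ℝ) (hb : ∀ i, b i ≠ 0) (a : Fin K → ℝ) (ha1 : ∑ i, a i = 1)
    (hs0 : (∑ i, a i * b i) ≠ 0) :
    lastDiag n (-1 / ∑ i, a i * b i) * (∑ i, a i • lastRowMat n S (θ i)) =
      ∑ i, (a i * b i / ∑ i, a i * b i) • (lastDiag n (-1 / b i) * lastRowMat n S (θ i)) := by
  set s := ∑ i, a i * b i with hs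
  ext r c
  by_cases hr : (r : ℕ) = n - 1
  · have hrl : ¬ ((r : ℕ) < n - 1) := by omega
    simp only [lastDiag, lastRowMat, Matrix.sum_apply, Matrix.smul_apply, Matrix.diagonal_mul,
      Matrix.of_apply, hr, if_pos rfl, dif_neg hrl, smul_eq_mul]
    rw [Finset.mul_sum]
    refine Finset.sum_congr rfl fun i _ => ?_
    have := hb i
    simp only [↓reduceIte]
    field_simp
  · have hrl : (r : ℕ) < n - 1 := by have := r.isLt; omega
    simp only [lastDiag, lastRowMat, Matrix.sum_apply, Matrix.smul_apply, Matrix.diagonal_mul,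
      Matrix.of_apply, if_neg hr, dif_pos hrl, smul_eq_mul, one_mul]
    rw [← Finset.sum_mul, ← Finset.sum_mul, ha1, ← Finset.sum_div, ← hs, div_self hs0, one_mul]

lemma quad_conj {n : ℕ} (A P : Matrix (Fin n) (Fin n) ℝ) (v : Fin n → ℝ) :
    v ⬝ᵥ ((Aᵀ * P * A) *ᵥ v) = (A *ᵥ v) ⬝ᵥ (P *ᵥ (A *ᵥ v)) := by
  rw [mul_assoc, ← Matrix.mulVec_mulVec, Matrix.dotProduct_mulVec, Matrix.vecMul_transpose,
    ← Matrix.mulVec_mulVec]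

lemma opnorm_lt_one_of_contr {E : Type*} [NormedAddCommGroup E] [NormedSpace ℝ E]
    [FiniteDimensional ℝ E] [Nontrivial E] (T : E →L[ℝ] E)
    (h : ∀ x : E, x ≠ 0 → ‖T x‖ < ‖x‖) : ‖T‖ < 1 := by
  obtain ⟨x₀, hx₀, hmax⟩ := (isCompact_sphere (0:E) 1).exists_isMaxOn
    (NormedSpace.sphere_nonempty.mpr zero_le_one) ((T.continuous.norm).continuousOn)
  have hx₀n : ‖x₀‖ = 1 := mem_sphere_zero_iff_norm.mp hx₀
  have hx₀0 : x₀ ≠ 0 := by intro h0; rw [h0, norm_zero] at hx₀n; norm_num at hx₀n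
  have hlt : ‖T x₀‖ < 1 := hx₀n ▸ h x₀ hx₀0
  have hble : ‖T‖ ≤ ‖T x₀‖ := by
    refine T.opNorm_le_bound (norm_nonneg _) fun x => ?_
    rcases eq_or_ne x 0 with rfl | hx
    · simp
    · have hxpos : 0 < ‖x‖ := norm_pos_iff.mpr hx
      have hu : ‖(‖x‖⁻¹ • x)‖ = 1 := norm_smul_inv_norm hx
      have h1 : ‖T (‖x‖⁻¹ • x)‖ ≤ ‖T x₀‖ := isMaxOn_iff.mp hmax _ (mem_sphere_zero_iff_norm.mpr hu)
      rw [T.map_smul, norm_smul, norm_inv, norm_norm] at h1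
      calc ‖T x‖ = ‖x‖ * (‖x‖⁻¹ * ‖T x‖) := by field_simp
      _ ≤ ‖x‖ * ‖T x₀‖ := by nlinarith
      _ = ‖T x₀‖ * ‖x‖ := mul_comm _ _
  linarith

set_option maxHeartbeats 2000000 in
/-- Global asymptotic stability of the open-loop dynamics of the feedforward controller:
if a common quadratic Lyapunov matrix `P` exists for the local models `Fᵢ Âᵢ`, then every
trajectory of `x_{k+1} = Γ(α_k) (∑ᵢ α_{k,i} Âᵢ) x_k` converges to `0`. -/
theorem openloop_gas (n K : ℕ) (hn : 2 ≤ n) (hK : 1 ≤ K)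
    (S : Matrix (Fin (n - 1)) (Fin n) ℝ) (θ : Fin K → Fin n → ℝ)
    (b : Fin K → ℝ) (hb : ∀ i, b i ≠ 0)
    (hsign : (∀ i, 0 < b i) ∨ (∀ i, b i < 0))
    (P : Matrix (Fin n) (Fin n) ℝ) (hP : P.PosDef)
    (hLyap : ∀ i : Fin K,
      (P - (lastDiag n (-1 / b i) * lastRowMat n S (θ i))ᵀ * P *
        (lastDiag n (-1 / b i) * lastRowMat n S (θ i))).PosDef)
    (α : ℕ → Fin K → ℝ) (hα : ∀ k, IsValidity (α k))
    (x : ℕ → Fin n → ℝ)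
    (hx : ∀ k, x (k + 1) =
      (lastDiag n (-1 / ∑ i, α k i * b i) *
        (∑ i, α k i • lastRowMat n S (θ i))).mulVec (x k)) :
    Tendsto x atTop (nhds 0) := by
  classical
  haveI : Nonempty (Fin n) := ⟨⟨0, by omega⟩⟩
  haveI : Nonempty (Fin K) := ⟨⟨0, hK⟩⟩
  -- basic facts about weights
  have hα1 : ∀ k, ∑ i, α k i = 1 := fun k => (hα k).1
  have hs : ∀ k, (∑ j, α k j * b j) ≠ 0 ∧ ∀ i, 0 ≤ α k i * b i / (∑ j, α k j * b j) := by
    intro k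
    have hex : ∃ i, 0 < α k i := by
      by_contra hcon
      push_neg at hcon
      have h0 : ∑ i, α k i = 0 :=
        Finset.sum_eq_zero fun i _ => le_antisymm (hcon i) ((hα k).2 i).1
      rw [hα1 k] at h0; norm_num at h0
    obtain ⟨i₀, hi₀⟩ := hex
    rcases hsign with hpos | hneg
    · have hsk : 0 < ∑ j, α k j * b j :=
        Finset.sum_pos' (fun i _ => mul_nonneg ((hα k).2 i).1 (hpos i).le)
          ⟨i₀, Finset.mem_univ _, mul_pos hi₀ (hpos i₀)⟩
      exact ⟨hsk.ne', fun i => div_nonneg (mul_nonneg ((hα k).2 i).1 (hpos i).le) hsk.le⟩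
    · have hsk : ∑ j, α k j * b j < 0 := by
        have h1 : 0 < ∑ j, α k j * (-(b j)) :=
          Finset.sum_pos' (fun i _ => mul_nonneg ((hα k).2 i).1 (by linarith [hneg i]))
            ⟨i₀, Finset.mem_univ _, mul_pos hi₀ (by linarith [hneg i₀])⟩
        have h2 : ∑ j, α k j * (-(b j)) = -∑ j, α k j * b j := by
          simp [mul_neg]
        linarith [h2 ▸ h1]
      refine ⟨hsk.ne, fun i => div_nonneg_iff.mpr (Or.inr ⟨?_, hsk.le⟩)⟩
      exact mul_nonpos_of_nonneg_of_nonpos ((hα k).2 i).1 (hneg i).le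
  have hβ1 : ∀ k, ∑ i, α k i * b i / (∑ j, α k j * b j) = 1 := fun k => by
    rw [← Finset.sum_div, div_self (hs k).1]
  -- the local closed-loop matrices
  set M : Fin K → Matrix (Fin n) (Fin n) ℝ :=
    fun i => lastDiag n (-1 / b i) * lastRowMat n S (θ i) with hM
  -- square root of P
  open scoped MatrixOrder in
  set Q : Matrix (Fin n) (Fin n) ℝ := CFC.sqrt P with hQ
  have hQQ : Q * Q = P := open scoped MatrixOrder in CFC.sqrt_mul_sqrt_self P hP.posSemidef.nonneg
  have hQH : Qᵀ = Q := by
    rw [← Matrix.conjTranspose_eq_transpose_of_trivial]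
    exact open scoped MatrixOrder in (CFC.sqrt_nonneg P).posSemidef.1
  have hQdet : Q.det ≠ 0 := by
    intro h0
    have hdet : Q.det * Q.det = P.det := by rw [← Matrix.det_mul, hQQ]
    rw [h0, mul_zero] at hdet
    exact hP.det_pos.ne' hdet.symm
  have hQunit : IsUnit Q.det := isUnit_iff_ne_zero.mpr hQdet
  have hQiQ : Q⁻¹ * Q = 1 := Matrix.nonsing_inv_mul Q hQunit
  have hQQi : Q * Q⁻¹ = 1 := Matrix.mul_nonsing_inv Q hQunit
  -- the quadratic form of P as a squared norm
  have KEY : ∀ v : Fin n → ℝ, v ⬝ᵥ (P *ᵥ v) = (Q *ᵥ v) ⬝ᵥ (Q *ᵥ v) := by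
    intro v
    rw [← hQQ, ← Matrix.mulVec_mulVec, Matrix.dotProduct_mulVec, ← Matrix.mulVec_transpose, hQH]
  set ι : (Fin n → ℝ) ≃ₗ[ℝ] EuclideanSpace ℝ (Fin n) :=
    (WithLp.linearEquiv 2 ℝ (Fin n → ℝ)).symm with hι
  have NB : ∀ v : Fin n → ℝ, ‖ι v‖ ^ 2 = v ⬝ᵥ v := by
    intro v
    rw [← real_inner_self_eq_norm_sq]
    simp [hι, PiLp.inner_apply, dotProduct, RCLike.inner_apply, WithLp.linearEquiv]
    rw [PiLp.norm_sq_eq_of_L2]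
    simp [Real.norm_eq_abs, sq_abs, sq]
  -- the conjugated continuous linear maps
  set N : Fin K → (EuclideanSpace ℝ (Fin n) →L[ℝ] EuclideanSpace ℝ (Fin n)) :=
    fun i => (Matrix.toEuclideanLin (Q * M i * Q⁻¹)).toContinuousLinearMap with hN
  have hNapp : ∀ (A : Matrix (Fin n) (Fin n) ℝ) (v : Fin n → ℝ),
      (Matrix.toEuclideanLin A).toContinuousLinearMap (ι v) = ι (A *ᵥ v) := fun A v => rfl
  -- each N i is a strict contraction
  have hcontr : ∀ i, ∀ y : EuclideanSpace ℝ (Fin n), y ≠ 0 → ‖N i y‖ < ‖y‖ := by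
    intro i y hy
    set w : Fin n → ℝ := ι.symm y with hw
    have hyw : y = ι w := (ι.apply_symm_apply y).symm
    set v : Fin n → ℝ := Q⁻¹ *ᵥ w with hv
    have hwv : Q *ᵥ v = w := by
      rw [hv, Matrix.mulVec_mulVec, hQQi, Matrix.one_mulVec]
    have hv0 : v ≠ 0 := by
      intro h0
      apply hy
      have hw0 : w = 0 := by rw [← hwv, h0, Matrix.mulVec_zero]
      rw [hyw, hw0, map_zero]
    have h1 : N i y = ι (Q *ᵥ (M i *ᵥ v)) := by
      rw [hyw, hN, hNapp]
      exact congrArg ι (by rw [hv, Matrix.mulVec_mulVec, Matrix.mulVec_mulVec])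
    have h2 := (hLyap i).dotProduct_mulVec_pos hv0
    rw [star_trivial] at h2
    rw [Matrix.sub_mulVec, dotProduct_sub] at h2
    have h3 : v ⬝ᵥ (((M i)ᵀ * P * M i) *ᵥ v) = (M i *ᵥ v) ⬝ᵥ (P *ᵥ (M i *ᵥ v)) :=
      quad_conj (M i) P v
    rw [h3] at h2
    have h4 : (M i *ᵥ v) ⬝ᵥ (P *ᵥ (M i *ᵥ v)) < v ⬝ᵥ (P *ᵥ v) := by linarith
    have h5 : ‖N i y‖ ^ 2 < ‖y‖ ^ 2 := by
      rw [h1, hyw, NB, NB, ← hwv, ← KEY, ← KEY]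
      exact h4
    nlinarith [norm_nonneg (N i y), norm_nonneg y]
  -- the contraction factor
  set ρ : ℝ := Finset.univ.sup' Finset.univ_nonempty (fun i => ‖N i‖) with hρ
  have hρ1 : ρ < 1 := by
    rw [hρ, Finset.sup'_lt_iff]
    exact fun i _ => opnorm_lt_one_of_contr (N i) (hcontr i)
  have hNρ : ∀ i, ‖N i‖ ≤ ρ := fun i => by
    rw [hρ]; exact Finset.le_sup' (fun j => ‖N j‖) (Finset.mem_univ i)
  have hρ0 : 0 ≤ ρ := le_trans (norm_nonneg _) (hNρ (Classical.arbitrary _))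
  -- the trajectory in Euclidean coordinates
  set y : ℕ → EuclideanSpace ℝ (Fin n) := fun k => ι (Q *ᵥ x k) with hy
  have hstep : ∀ k, ‖y (k + 1)‖ ≤ ρ * ‖y k‖ := by
    intro k
    set Mk : Matrix (Fin n) (Fin n) ℝ :=
      lastDiag n (-1 / ∑ i, α k i * b i) * (∑ i, α k i • lastRowMat n S (θ i)) with hMk
    set Tk : EuclideanSpace ℝ (Fin n) →L[ℝ] EuclideanSpace ℝ (Fin n) :=
      (Matrix.toEuclideanLin (Q * Mk * Q⁻¹)).toContinuousLinearMap with hTk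
    have hMkdec : Mk = ∑ i, (α k i * b i / (∑ j, α k j * b j)) • M i := by
      rw [hMk, convex_decomp n K S θ b hb (α k) (hα1 k) (hs k).1]
    have hQMk : Q * Mk * Q⁻¹ = ∑ i, (α k i * b i / (∑ j, α k j * b j)) • (Q * M i * Q⁻¹) := by
      rw [hMkdec, Finset.mul_sum, Finset.sum_mul]
      refine Finset.sum_congr rfl fun i _ => ?_
      rw [Matrix.mul_smul, Matrix.smul_mul]
    have hTksum : Tk = ∑ i, (α k i * b i / (∑ j, α k j * b j)) • N i := by
      rw [hTk, hQMk, map_sum, map_sum]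
      refine Finset.sum_congr rfl fun i _ => ?_
      rw [_root_.map_smul, _root_.map_smul]
    have hTknorm : ‖Tk‖ ≤ ρ := by
      rw [hTksum]
      calc ‖∑ i, (α k i * b i / (∑ j, α k j * b j)) • N i‖
          ≤ ∑ i, ‖(α k i * b i / (∑ j, α k j * b j)) • N i‖ := norm_sum_le _ _
        _ ≤ ∑ i, (α k i * b i / (∑ j, α k j * b j)) * ρ := by
            refine Finset.sum_le_sum fun i _ => ?_
            refine le_trans (ContinuousLinearMap.opNorm_smul_le _ _) ?_
            rw [Real.norm_of_nonneg ((hs k).2 i)]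
            exact mul_le_mul_of_nonneg_left (hNρ i) ((hs k).2 i)
        _ = ρ := by rw [← Finset.sum_mul, hβ1 k, one_mul]
    have hystep : y (k + 1) = Tk (y k) := by
      rw [hy]
      simp only
      rw [hx k, hTk, hNapp]
      exact congrArg ι (by
        rw [Matrix.mulVec_mulVec, Matrix.mulVec_mulVec, mul_assoc (Q * Mk) Q⁻¹ Q, hQiQ, mul_one])
    rw [hystep]
    calc ‖Tk (y k)‖ ≤ ‖Tk‖ * ‖y k‖ := Tk.le_opNorm _
      _ ≤ ρ * ‖y k‖ := mul_le_mul_of_nonneg_right hTknorm (norm_nonneg _)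
  have hbound : ∀ k, ‖y k‖ ≤ ρ ^ k * ‖y 0‖ := by
    intro k
    induction k with
    | zero => simp
    | succ m ih =>
      calc ‖y (m + 1)‖ ≤ ρ * ‖y m‖ := hstep m
        _ ≤ ρ * (ρ ^ m * ‖y 0‖) := mul_le_mul_of_nonneg_left ih hρ0
        _ = ρ ^ (m + 1) * ‖y 0‖ := by ring
  have hy0 : Tendsto y atTop (nhds 0) := by
    rw [tendsto_zero_iff_norm_tendsto_zero]
    refine squeeze_zero (fun k => norm_nonneg _) hbound ?_
    have h6 := (tendsto_pow_atTop_nhds_zero_of_lt_one hρ0 hρ1).mul_const ‖y 0‖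
    simpa using h6
  -- transport back
  set G : EuclideanSpace ℝ (Fin n) →ₗ[ℝ] (Fin n → ℝ) :=
    (Matrix.mulVecLin Q⁻¹).comp ι.symm.toLinearMap with hG
  have hGc : Continuous G := G.continuous_of_finiteDimensional
  have hxG : x = fun k => G (y k) := by
    funext k
    have : G (y k) = Q⁻¹ *ᵥ (ι.symm (ι (Q *ᵥ x k))) := rfl
    rw [this, ι.symm_apply_apply, Matrix.mulVec_mulVec, hQiQ, Matrix.one_mulVec]
  rw [hxG]
  have h7 : Tendsto (fun k => G (y k)) atTop (nhds (G 0)) := (hGc.tendsto 0).comp hy0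
  simpa using h7
end

section
/- Fix n ≥ 2, K ≥ 1 and m ≥ 1. Let S ∈ ℝ^{(n−1)×n} be a fixed matrix, and for each i ∈ {1,…,K} let θ_i ∈ ℝ^n, B̂_i ∈ ℝ^{n×m}, ô_i ∈ ℝ^n, and b_i ∈ ℝ, where all b_i are nonzero and of the same sign. Define Â_i ∈ ℝ^{n×n} as the matrix whose first n−1 rows are the rows of S and whose last row is θ_iᵀ; define F_i = diag(1,…,1, −1/b_i); and for a validity vector α define Γ(α) = diag(1,…,1, −1/(Σ_{i=1}^K α_i b_i)). Suppose there exists a symmetric positive definite matrix P ∈ ℝ^{n×n} such that P − (F_i Â_i)ᵀ P (F_i Â_i) is positive definite for every i ∈ {1,…,K}. Then for every sequence of validity vectors (α_k)_{k∈ℕ}, every bounded input sequence (w_k)_{k∈ℕ} in ℝ^m, and every initial state x_0 ∈ ℝ^n, the sequence defined by x_{k+1} = Γ(α_k) · (Σ_{i=1}^K α_{k,i} (Â_i x_k + B̂_i w_k + ô_i)) is bounded, i.e. sup_k ‖x_k‖ < ∞. -/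
open Matrix Finset Filter

/-- Sum of matrices acting on a vector. -/
lemma sum_mulVec' {n : ℕ} {ι : Type*} (s : Finset ι) (M : ι → Matrix (Fin n) (Fin n) ℝ)
    (v : Fin n → ℝ) : (∑ i ∈ s, M i) *ᵥ v = ∑ i ∈ s, M i *ᵥ v := by
  classical
  induction s using Finset.induction with
  | empty => simp [Matrix.mulVec]
  | insert _ _ h ih => rw [Finset.sum_insert h, Finset.sum_insert h, Matrix.add_mulVec, ih]

open scoped MatrixOrder in
set_option maxHeartbeats 1000000 in
/-- Existence of the quadratic "P-norm" associated with a positive definite matrix. -/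
lemma pnorm_exists {n : ℕ} {P : Matrix (Fin n) (Fin n) ℝ} (hP : P.PosDef) :
    ∃ N : (Fin n → ℝ) → ℝ, Continuous N ∧ (∀ v, 0 ≤ N v) ∧
      (∀ v, N v ^ 2 = v ⬝ᵥ P *ᵥ v) ∧ (∀ (c : ℝ) (v), N (c • v) = |c| * N v) ∧
      (∀ {ι : Type} (s : Finset ι) (f : ι → (Fin n → ℝ)),
        N (∑ i ∈ s, f i) ≤ ∑ i ∈ s, N (f i)) := by
  classical
  have hPsd : P.PosSemidef := hP.posSemidef
  set Q : Matrix (Fin n) (Fin n) ℝ := CFC.sqrt P with hQ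
  have hQQ : Q * Q = P := by rw [← pow_two]; exact CFC.sq_sqrt P hPsd.nonneg
  have hQT : Qᵀ = Q := by
    have h := (CFC.sqrt_nonneg P).posSemidef.isHermitian
    simpa using h.eq
  set T : (Fin n → ℝ) →ₗ[ℝ] EuclideanSpace ℝ (Fin n) :=
    (WithLp.linearEquiv 2 ℝ (Fin n → ℝ)).symm.toLinearMap ∘ₗ Q.mulVecLin with hT
  have hTapp : ∀ (v : Fin n → ℝ) (i : Fin n), T v i = (Q *ᵥ v) i := fun v i => rfl
  refine ⟨fun v => ‖T v‖, ?_, fun v => norm_nonneg _, ?_, ?_, ?_⟩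
  · exact (T.continuous_of_finiteDimensional).norm
  · intro v
    show ‖T v‖ ^ 2 = _
    have h1 : ‖T v‖ = Real.sqrt (∑ i, (Q *ᵥ v) i ^ 2) := by
      rw [EuclideanSpace.norm_eq]
      congr 1
      refine Finset.sum_congr rfl fun i _ => ?_
      rw [hTapp v i, Real.norm_eq_abs, sq_abs]
    rw [h1, Real.sq_sqrt (Finset.sum_nonneg fun i _ => sq_nonneg _)]
    have h2 : ∑ i, (Q *ᵥ v) i ^ 2 = (Q *ᵥ v) ⬝ᵥ (Q *ᵥ v) := by
      simp [dotProduct, pow_two]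
    rw [h2]
    calc (Q *ᵥ v) ⬝ᵥ (Q *ᵥ v) = (v ᵥ* Q) ⬝ᵥ (Q *ᵥ v) := by
          rw [← hQT, Matrix.vecMul_transpose, hQT]
      _ = v ⬝ᵥ Q *ᵥ (Q *ᵥ v) := (Matrix.dotProduct_mulVec v Q (Q *ᵥ v)).symm
      _ = v ⬝ᵥ P *ᵥ v := by rw [Matrix.mulVec_mulVec, hQQ]
  · intro c v
    show ‖T (c • v)‖ = _
    rw [T.map_smul, norm_smul, Real.norm_eq_abs]
  · intro ι s f
    show ‖T (∑ i ∈ s, f i)‖ ≤ ∑ i ∈ s, ‖T (f i)‖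
    rw [map_sum]
    exact norm_sum_le _ _

/-- Ratio bound on the sphere for continuous positively-homogeneous functions. -/
lemma ratio_bound {n : ℕ} (hn : 0 < n) (f g : (Fin n → ℝ) → ℝ)
    (hf : Continuous f) (hg : Continuous g)
    (hfh : ∀ (c : ℝ), 0 ≤ c → ∀ x, f (c • x) = c * f x)
    (hgh : ∀ (c : ℝ), 0 ≤ c → ∀ x, g (c • x) = c * g x)
    (hgpos : ∀ x : Fin n → ℝ, x ≠ 0 → 0 < g x) :
    ∃ ρ : ℝ, (∀ x, f x ≤ ρ * g x) ∧ ((∀ x : Fin n → ℝ, x ≠ 0 → f x < g x) → ρ < 1) := by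
  haveI : Nonempty (Fin n) := ⟨⟨0, hn⟩⟩
  have hsne : (Metric.sphere (0 : Fin n → ℝ) 1).Nonempty :=
    NormedSpace.sphere_nonempty.mpr zero_le_one
  have hcont : ContinuousOn (fun x => f x / g x) (Metric.sphere (0 : Fin n → ℝ) 1) := by
    apply hf.continuousOn.div hg.continuousOn
    intro x hx
    have hx0 : x ≠ 0 := by
      rw [mem_sphere_zero_iff_norm] at hx
      intro h; rw [h] at hx; simp at hx
    exact (hgpos x hx0).ne'
  obtain ⟨z, hz, hmax⟩ := (isCompact_sphere (0 : Fin n → ℝ) 1).exists_isMaxOn hsne hcont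
  have hz0 : z ≠ 0 := by
    rw [mem_sphere_zero_iff_norm] at hz
    intro h; rw [h] at hz; simp at hz
  refine ⟨f z / g z, ?_, ?_⟩
  · intro x
    by_cases hx0 : x = 0
    · subst hx0
      have hf0 : f 0 = 0 := by
        have := hfh 0 le_rfl 0; simpa using this
      have hg0 : g 0 = 0 := by
        have := hgh 0 le_rfl 0; simpa using this
      rw [hf0, hg0, mul_zero]
    · set u : Fin n → ℝ := ‖x‖⁻¹ • x with hu
      have hxn : (0:ℝ) < ‖x‖ := norm_pos_iff.mpr hx0
      have hun : u ∈ Metric.sphere (0 : Fin n → ℝ) 1 := by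
        rw [mem_sphere_zero_iff_norm, hu, norm_smul]
        simp [abs_of_nonneg (inv_nonneg.mpr hxn.le), inv_mul_cancel₀ hxn.ne']
      have hu0 : u ≠ 0 := by
        rw [mem_sphere_zero_iff_norm] at hun
        intro h; rw [h] at hun; simp at hun
      have hle : f u / g u ≤ f z / g z := hmax hun
      have hgu : 0 < g u := hgpos u hu0
      have hfu : f u ≤ (f z / g z) * g u := by
        rw [div_le_div_iff₀ hgu (hgpos z hz0)] at hle
        rw [div_mul_eq_mul_div, le_div_iff₀ (hgpos z hz0)]
        linarith
      have hxu : x = ‖x‖ • u := by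
        rw [hu, smul_smul, mul_inv_cancel₀ hxn.ne', one_smul]
      calc f x = ‖x‖ * f u := by rw [← hfh ‖x‖ hxn.le u, ← hxu]
        _ ≤ ‖x‖ * ((f z / g z) * g u) := mul_le_mul_of_nonneg_left hfu hxn.le
        _ = (f z / g z) * (‖x‖ * g u) := by ring
        _ = (f z / g z) * g x := by rw [← hgh ‖x‖ hxn.le u, ← hxu]
  · intro hstrict
    exact (div_lt_one (hgpos z hz0)).mpr (hstrict z hz0)

/-- Linear recursion bound. -/
lemma geom_bound (ρ D : ℝ) (hρ0 : 0 ≤ ρ) (hρ1 : ρ < 1) (y : ℕ → ℝ)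
    (hrec : ∀ k, y (k + 1) ≤ ρ * y k + D) :
    ∀ k, y k ≤ max (y 0) (D / (1 - ρ)) := by
  intro k
  set M := max (y 0) (D / (1 - ρ)) with hM
  induction k with
  | zero => exact le_max_left _ _
  | succ k ih =>
    have h1 : 0 < 1 - ρ := by linarith
    have h2 : D ≤ (1 - ρ) * M := by
      have := le_max_right (y 0) (D / (1 - ρ))
      rw [div_le_iff₀ h1] at this
      linarith [this]
    calc y (k + 1) ≤ ρ * y k + D := hrec k
      _ ≤ ρ * M + D := by nlinarith
      _ ≤ M := by nlinarith

set_option maxHeartbeats 1000000 in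
/-- Contraction in the P-norm from the Lyapunov inequality. -/
lemma contraction_of_lyap {n : ℕ} (hn0 : 0 < n) {P : Matrix (Fin n) (Fin n) ℝ}
    (hP : P.PosDef) (G : Matrix (Fin n) (Fin n) ℝ)
    (hL : (P - Gᵀ * P * G).PosDef)
    (N : (Fin n → ℝ) → ℝ) (hNcont : Continuous N) (hNnonneg : ∀ v, 0 ≤ N v)
    (hNsq : ∀ v, N v ^ 2 = v ⬝ᵥ P *ᵥ v) (hNsmul : ∀ (c : ℝ) (v), N (c • v) = |c| * N v) :
    ∃ ρ : ℝ, ρ < 1 ∧ ∀ v, N (G *ᵥ v) ≤ ρ * N v := by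
  have hNpos : ∀ v : Fin n → ℝ, v ≠ 0 → 0 < N v := by
    intro v hv
    have h1 : 0 < v ⬝ᵥ P *ᵥ v := by
      have := hP.dotProduct_mulVec_pos hv; simpa using this
    rw [← hNsq] at h1
    exact lt_of_pow_lt_pow_left₀ 2 (hNnonneg v) (by simpa using h1)
  have hNhom : ∀ (c : ℝ), 0 ≤ c → ∀ v : Fin n → ℝ, N (c • v) = c * N v := by
    intro c hc v; rw [hNsmul, abs_of_nonneg hc]
  have hmvCont : Continuous fun v : Fin n → ℝ => G *ᵥ v := by
    have h := G.mulVecLin.continuous_of_finiteDimensional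
    have he : (fun v : Fin n → ℝ => G *ᵥ v) = ⇑G.mulVecLin := by
      funext v; rw [Matrix.mulVecLin_apply]
    rw [he]; exact h
  have hAi : Continuous fun v : Fin n → ℝ => N (G *ᵥ v) := hNcont.comp hmvCont
  have hAh : ∀ (c : ℝ), 0 ≤ c → ∀ v : Fin n → ℝ, N (G *ᵥ (c • v)) = c * N (G *ᵥ v) := by
    intro c hc v
    rw [Matrix.mulVec_smul, hNhom c hc]
  obtain ⟨ρ, h1, h2⟩ := ratio_bound hn0 (fun v => N (G *ᵥ v)) N hAi hNcont hAh hNhom hNpos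
  refine ⟨ρ, h2 ?_, h1⟩
  intro v hv
  have hsq : N (G *ᵥ v) ^ 2 < N v ^ 2 := by
    rw [hNsq, hNsq]
    have h3 : 0 < v ⬝ᵥ (P - Gᵀ * P * G) *ᵥ v := by
      have := hL.dotProduct_mulVec_pos hv; simpa using this
    rw [Matrix.sub_mulVec, dotProduct_sub] at h3
    have h4 : v ⬝ᵥ (Gᵀ * P * G) *ᵥ v = (G *ᵥ v) ⬝ᵥ P *ᵥ (G *ᵥ v) := by
      calc v ⬝ᵥ (Gᵀ * P * G) *ᵥ v
          = v ⬝ᵥ Gᵀ *ᵥ ((P * G) *ᵥ v) := by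
            rw [Matrix.mulVec_mulVec, Matrix.mul_assoc]
        _ = (v ᵥ* Gᵀ) ⬝ᵥ ((P * G) *ᵥ v) := Matrix.dotProduct_mulVec _ _ _
        _ = (G *ᵥ v) ⬝ᵥ P *ᵥ (G *ᵥ v) := by
            rw [Matrix.vecMul_transpose, ← Matrix.mulVec_mulVec]
    rw [h4] at h3
    linarith
  exact lt_of_pow_lt_pow_left₀ 2 (hNnonneg v) hsq

set_option maxHeartbeats 1000000 in
/-- The closed-loop convexity identity. -/
lemma key_identity {n K : ℕ} (S : Matrix (Fin (n - 1)) (Fin n) ℝ) (θ : Fin K → Fin n → ℝ)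
    (b : Fin K → ℝ) (hb : ∀ i, b i ≠ 0) (a : Fin K → ℝ) (ha1 : ∑ i, a i = 1)
    (s : ℝ) (hs : s = ∑ i, a i * b i) (hs0 : s ≠ 0) :
    lastDiag n (-1 / s) * (∑ i, a i • lastRowMat n S (θ i))
      = ∑ i, (a i * b i / s) • (lastDiag n (-1 / b i) * lastRowMat n S (θ i)) := by
  have hβ1 : ∑ i, a i * b i / s = 1 := by
    rw [← Finset.sum_div, ← hs]
    exact div_self hs0
  ext r c
  have hrn : (r : ℕ) < n := r.isLt
  simp only [lastDiag, lastRowMat, Matrix.diagonal_mul, Matrix.sum_apply,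
    Matrix.smul_apply, Matrix.of_apply, smul_eq_mul]
  by_cases hr : (r : ℕ) < n - 1
  · have hrne : ¬ (r : ℕ) = n - 1 := by omega
    simp only [dif_pos hr, if_neg hrne, one_mul]
    rw [← Finset.sum_mul, ← Finset.sum_mul, ha1, hβ1]
  · have hre : (r : ℕ) = n - 1 := by omega
    simp only [dif_neg hr, if_pos hre]
    rw [Finset.mul_sum]
    refine Finset.sum_congr rfl fun i _ => ?_
    field_simp [hb i, hs0]

set_option maxHeartbeats 2000000 in
/-- BIBO stability of the feedforward controller: under a common quadratic Lyapunov
matrix for the local models `Fᵢ Âᵢ`, every trajectory of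
`x_{k+1} = Γ(α_k) ∑ᵢ α_{k,i} (Âᵢ x_k + B̂ᵢ w_k + ôᵢ)` with bounded input `w` is bounded. -/
theorem controller_bibo (n K m : ℕ) (hn : 2 ≤ n) (hK : 1 ≤ K) (hm : 1 ≤ m)
    (S : Matrix (Fin (n - 1)) (Fin n) ℝ) (θ : Fin K → Fin n → ℝ)
    (Bhat : Fin K → Matrix (Fin n) (Fin m) ℝ) (ohat : Fin K → Fin n → ℝ)
    (b : Fin K → ℝ) (hb : ∀ i, b i ≠ 0)
    (hsign : (∀ i, 0 < b i) ∨ (∀ i, b i < 0))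
    (P : Matrix (Fin n) (Fin n) ℝ) (hP : P.PosDef)
    (hLyap : ∀ i : Fin K,
      (P - (lastDiag n (-1 / b i) * lastRowMat n S (θ i))ᵀ * P *
        (lastDiag n (-1 / b i) * lastRowMat n S (θ i))).PosDef)
    (α : ℕ → Fin K → ℝ) (hα : ∀ k, IsValidity (α k))
    (w : ℕ → Fin m → ℝ) (hw : ∃ C : ℝ, ∀ k, ‖w k‖ ≤ C)
    (x : ℕ → Fin n → ℝ)
    (hx : ∀ k, x (k + 1) =
      (lastDiag n (-1 / ∑ i, α k i * b i)).mulVec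
        (∑ i, α k i • ((lastRowMat n S (θ i)).mulVec (x k)
          + (Bhat i).mulVec (w k) + ohat i))) :
    ∃ C : ℝ, ∀ k, ‖x k‖ ≤ C := by
  classical
  have hn0 : 0 < n := by omega
  haveI : Nonempty (Fin K) := ⟨⟨0, hK⟩⟩
  obtain ⟨N, hNcont, hNnonneg, hNsq, hNsmul, hNsum⟩ := pnorm_exists hP
  have hNadd : ∀ u v : Fin n → ℝ, N (u + v) ≤ N u + N v := by
    intro u v
    have h := hNsum (Finset.univ : Finset (Fin 2)) (fun j => if j = 0 then u else v)
    simpa [Fin.sum_univ_two] using h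
  have hNpos : ∀ v : Fin n → ℝ, v ≠ 0 → 0 < N v := by
    intro v hv
    have h1 : 0 < v ⬝ᵥ P *ᵥ v := by
      have := hP.dotProduct_mulVec_pos hv; simpa using this
    rw [← hNsq] at h1
    exact lt_of_pow_lt_pow_left₀ 2 (hNnonneg v) (by simpa using h1)
  have hNhom : ∀ (c : ℝ), 0 ≤ c → ∀ v : Fin n → ℝ, N (c • v) = c * N v := by
    intro c hc v; rw [hNsmul, abs_of_nonneg hc]
  have hnormhom : ∀ (c : ℝ), 0 ≤ c → ∀ v : Fin n → ℝ, ‖c • v‖ = c * ‖v‖ := by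
    intro c hc v; rw [norm_smul, Real.norm_eq_abs, abs_of_nonneg hc]
  -- comparison constants
  obtain ⟨c₀, hc₀, -⟩ := ratio_bound hn0 (fun v => ‖v‖) N continuous_norm hNcont
    hnormhom hNhom hNpos
  obtain ⟨c₂, hc₂, -⟩ := ratio_bound hn0 N (fun v => ‖v‖) hNcont continuous_norm
    hNhom hnormhom (fun v hv => norm_pos_iff.mpr hv)
  -- contraction factors
  have hcontr : ∀ i : Fin K, ∃ ρ : ℝ, ρ < 1 ∧
      ∀ v, N ((lastDiag n (-1 / b i) * lastRowMat n S (θ i)) *ᵥ v) ≤ ρ * N v :=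
    fun i => contraction_of_lyap hn0 hP _ (hLyap i) N hNcont hNnonneg hNsq hNsmul
  choose ρs hρs1 hρs2 using hcontr
  set ρ : ℝ := max 0 (Finset.univ.sup' Finset.univ_nonempty ρs) with hρdef
  have hρ0 : 0 ≤ ρ := le_max_left _ _
  have hρ1 : ρ < 1 := by
    rw [hρdef, max_lt_iff]
    exact ⟨one_pos, (Finset.sup'_lt_iff _).mpr fun i _ => hρs1 i⟩
  have hρi : ∀ i v, N ((lastDiag n (-1 / b i) * lastRowMat n S (θ i)) *ᵥ v) ≤ ρ * N v := by
    intro i v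
    refine le_trans (hρs2 i v) (mul_le_mul_of_nonneg_right ?_ (hNnonneg v))
    exact le_trans (Finset.le_sup' ρs (Finset.mem_univ i)) (le_max_right _ _)
  -- the mixing denominators
  set s : ℕ → ℝ := fun k => ∑ i, α k i * b i with hs
  have hδ : ∃ δ : ℝ, 0 < δ ∧ ∀ k, δ ≤ |s k| ∧ ∀ i : Fin K, 0 ≤ α k i * b i / s k := by
    rcases hsign with hpos | hneg
    · refine ⟨Finset.univ.inf' Finset.univ_nonempty b, ?_, fun k => ?_⟩
      · exact (Finset.lt_inf'_iff _).mpr fun i _ => hpos i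
      · set δ := Finset.univ.inf' Finset.univ_nonempty b with hδdef
        have hδpos : 0 < δ := (Finset.lt_inf'_iff _).mpr fun i _ => hpos i
        have hks : δ ≤ s k := by
          have h1 : ∀ i ∈ Finset.univ, α k i * δ ≤ α k i * b i := fun i _ =>
            mul_le_mul_of_nonneg_left (Finset.inf'_le b (Finset.mem_univ i)) ((hα k).2 i).1
          calc δ = (∑ i, α k i) * δ := by rw [(hα k).1, one_mul]
            _ = ∑ i, α k i * δ := Finset.sum_mul _ _ _
            _ ≤ ∑ i, α k i * b i := Finset.sum_le_sum h1
            _ = s k := rfl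
        refine ⟨hks.trans (le_abs_self _), fun i => ?_⟩
        exact div_nonneg (mul_nonneg ((hα k).2 i).1 (hpos i).le) (by linarith)
    · refine ⟨Finset.univ.inf' Finset.univ_nonempty (fun i => -b i), ?_, fun k => ?_⟩
      · exact (Finset.lt_inf'_iff _).mpr fun i _ => by linarith [hneg i]
      · set δ := Finset.univ.inf' Finset.univ_nonempty (fun i => -b i) with hδdef
        have hδpos : 0 < δ := (Finset.lt_inf'_iff _).mpr fun i _ => by linarith [hneg i]
        have hks : δ ≤ -s k := by
          have h1 : ∀ i ∈ Finset.univ, α k i * δ ≤ α k i * (-b i) := fun i _ =>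
            mul_le_mul_of_nonneg_left (Finset.inf'_le (fun i => -b i) (Finset.mem_univ i))
              ((hα k).2 i).1
          have h2 : ∑ i, α k i * (-b i) = -s k := by
            simp [hs, Finset.sum_neg_distrib, mul_comm]
          calc δ = (∑ i, α k i) * δ := by rw [(hα k).1, one_mul]
            _ = ∑ i, α k i * δ := Finset.sum_mul _ _ _
            _ ≤ ∑ i, α k i * (-b i) := Finset.sum_le_sum h1
            _ = -s k := h2
        refine ⟨hks.trans (neg_le_abs _), fun i => ?_⟩
        have ha : α k i * b i ≤ 0 := mul_nonpos_of_nonneg_of_nonpos ((hα k).2 i).1 (hneg i).le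
        have hsklt : s k < 0 := by linarith
        have := div_nonneg (neg_nonneg.mpr ha) (neg_nonneg.mpr hsklt.le)
        rwa [neg_div_neg_eq] at this
  obtain ⟨δ, hδpos, hδk⟩ := hδ
  have hsne : ∀ k, s k ≠ 0 := by
    intro k h
    have h1 := (hδk k).1
    rw [h] at h1; simp at h1; linarith
  have hβ1 : ∀ k, ∑ i, α k i * b i / s k = 1 := by
    intro k
    rw [← Finset.sum_div]
    exact div_self (hsne k)
  -- step decomposition
  set d : ℕ → (Fin n → ℝ) :=
    fun k => lastDiag n (-1 / s k) *ᵥ (∑ i, α k i • (Bhat i *ᵥ w k + ohat i)) with hd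
  have hstep : ∀ k, x (k + 1) =
      (∑ i, (α k i * b i / s k) • (lastDiag n (-1 / b i) * lastRowMat n S (θ i))) *ᵥ x k
        + d k := by
    intro k
    rw [hx k]
    have hsplit : (∑ i, α k i • (lastRowMat n S (θ i) *ᵥ x k + Bhat i *ᵥ w k + ohat i))
        = (∑ i, α k i • lastRowMat n S (θ i)) *ᵥ x k
          + ∑ i, α k i • (Bhat i *ᵥ w k + ohat i) := by
      rw [sum_mulVec', ← Finset.sum_add_distrib]
      refine Finset.sum_congr rfl fun i _ => ?_
      rw [Matrix.smul_mulVec, ← smul_add, add_assoc]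
    rw [hsplit, Matrix.mulVec_add, Matrix.mulVec_mulVec,
      key_identity S θ b hb (α k) (hα k).1 (s k) rfl (hsne k)]
  -- bound on the disturbance
  obtain ⟨Cw, hCw⟩ := hw
  have hCw0 : 0 ≤ Cw := le_trans (norm_nonneg _) (hCw 0)
  have hBop : ∀ i : Fin K, ∃ c : ℝ, 0 ≤ c ∧ ∀ v : Fin m → ℝ, ‖Bhat i *ᵥ v‖ ≤ c * ‖v‖ := by
    intro i
    set L : (Fin m → ℝ) →L[ℝ] (Fin n → ℝ) :=
      LinearMap.toContinuousLinearMap (Bhat i).mulVecLin with hL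
    refine ⟨‖L‖, norm_nonneg L, fun v => ?_⟩
    have h1 := L.le_opNorm v
    have h2 : L v = Bhat i *ᵥ v := by
      rw [hL]
      simp [Matrix.mulVecLin_apply]
    rwa [h2] at h1
  choose cB hcB0 hcB using hBop
  set Z : ℝ := ∑ i, (cB i * Cw + ‖ohat i‖) with hZdef
  have hZ0 : 0 ≤ Z :=
    Finset.sum_nonneg fun i _ => add_nonneg (mul_nonneg (hcB0 i) hCw0) (norm_nonneg _)
  have hZ : ∀ k, ‖∑ i, α k i • (Bhat i *ᵥ w k + ohat i)‖ ≤ Z := by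
    intro k
    refine le_trans (norm_sum_le _ _) (Finset.sum_le_sum fun i _ => ?_)
    rw [norm_smul, Real.norm_eq_abs, abs_of_nonneg ((hα k).2 i).1]
    have h1 : ‖Bhat i *ᵥ w k + ohat i‖ ≤ cB i * Cw + ‖ohat i‖ := by
      refine le_trans (norm_add_le _ _) (add_le_add ?_ le_rfl)
      exact le_trans (hcB i _) (mul_le_mul_of_nonneg_left (hCw k) (hcB0 i))
    calc α k i * ‖Bhat i *ᵥ w k + ohat i‖
        ≤ 1 * (cB i * Cw + ‖ohat i‖) :=
          mul_le_mul ((hα k).2 i).2 h1 (norm_nonneg _) one_pos.le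
      _ = cB i * Cw + ‖ohat i‖ := one_mul _
  have hdiag : ∀ k (v : Fin n → ℝ), ‖lastDiag n (-1 / s k) *ᵥ v‖ ≤ max 1 δ⁻¹ * ‖v‖ := by
    intro k v
    have hmax1 : (0:ℝ) ≤ max 1 δ⁻¹ := le_trans zero_le_one (le_max_left _ _)
    have hmax0 : 0 ≤ max 1 δ⁻¹ * ‖v‖ := mul_nonneg hmax1 (norm_nonneg _)
    rw [pi_norm_le_iff_of_nonneg hmax0]
    intro r
    have hvr : (lastDiag n (-1 / s k) *ᵥ v) r
        = (if (r : ℕ) = n - 1 then -1 / s k else 1) * v r := by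
      simp [lastDiag, Matrix.mulVec_diagonal]
    rw [hvr, Real.norm_eq_abs, abs_mul]
    have hcoef : |if (r : ℕ) = n - 1 then -1 / s k else 1| ≤ max 1 δ⁻¹ := by
      by_cases hr : (r : ℕ) = n - 1
      · rw [if_pos hr, abs_div, abs_neg, abs_one]
        refine le_trans ?_ (le_max_right 1 δ⁻¹)
        rw [one_div]
        exact inv_anti₀ hδpos (hδk k).1
      · rw [if_neg hr, abs_one]
        exact le_max_left _ _
    calc |if (r : ℕ) = n - 1 then -1 / s k else 1| * |v r|
        ≤ max 1 δ⁻¹ * |v r| := mul_le_mul_of_nonneg_right hcoef (abs_nonneg _)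
      _ ≤ max 1 δ⁻¹ * ‖v‖ := by
          refine mul_le_mul_of_nonneg_left ?_ hmax1
          have := norm_le_pi_norm v r
          rwa [Real.norm_eq_abs] at this
  set c₂' : ℝ := max c₂ 0 with hc₂'
  set D : ℝ := c₂' * (max 1 δ⁻¹ * Z) with hD
  have hc₂'0 : 0 ≤ c₂' := le_max_right _ _
  have hdk : ∀ k, N (d k) ≤ D := by
    intro k
    have h1 : N (d k) ≤ c₂ * ‖d k‖ := hc₂ (d k)
    have h2 : c₂ * ‖d k‖ ≤ c₂' * ‖d k‖ :=
      mul_le_mul_of_nonneg_right (le_max_left _ _) (norm_nonneg _)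
    have h3 : ‖d k‖ ≤ max 1 δ⁻¹ * Z := by
      rw [hd]
      refine le_trans (hdiag k _) ?_
      exact mul_le_mul_of_nonneg_left (hZ k) (le_trans zero_le_one (le_max_left _ _))
    calc N (d k) ≤ c₂' * ‖d k‖ := le_trans h1 h2
      _ ≤ c₂' * (max 1 δ⁻¹ * Z) := mul_le_mul_of_nonneg_left h3 hc₂'0
  have hD0 : 0 ≤ D := le_trans (hNnonneg (d 0)) (hdk 0)
  -- the recursion
  have hrec : ∀ k, N (x (k + 1)) ≤ ρ * N (x k) + D := by
    intro k
    rw [hstep k]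
    have h1 : N ((∑ i, (α k i * b i / s k) •
        (lastDiag n (-1 / b i) * lastRowMat n S (θ i))) *ᵥ x k) ≤ ρ * N (x k) := by
      rw [sum_mulVec']
      have h2 : ∀ i ∈ Finset.univ, ((α k i * b i / s k) •
          (lastDiag n (-1 / b i) * lastRowMat n S (θ i))) *ᵥ x k
          = (α k i * b i / s k) • ((lastDiag n (-1 / b i) * lastRowMat n S (θ i)) *ᵥ x k) :=
        fun i _ => Matrix.smul_mulVec _ _ _
      rw [Finset.sum_congr rfl h2]
      refine le_trans (hNsum Finset.univ _) ?_
      have h3 : ∀ i ∈ Finset.univ, N ((α k i * b i / s k) •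
          ((lastDiag n (-1 / b i) * lastRowMat n S (θ i)) *ᵥ x k))
          ≤ (α k i * b i / s k) * (ρ * N (x k)) := by
        intro i _
        rw [hNsmul, abs_of_nonneg ((hδk k).2 i)]
        exact mul_le_mul_of_nonneg_left (hρi i (x k)) ((hδk k).2 i)
      refine le_trans (Finset.sum_le_sum h3) ?_
      rw [← Finset.sum_mul, hβ1 k, one_mul]
    calc N (_ + d k) ≤ N _ + N (d k) := hNadd _ _
      _ ≤ ρ * N (x k) + D := add_le_add h1 (hdk k)
  have hgeom := geom_bound ρ D hρ0 hρ1 (fun k => N (x k)) hrec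
  set M : ℝ := max (N (x 0)) (D / (1 - ρ)) with hM
  refine ⟨max c₀ 0 * M, fun k => ?_⟩
  calc ‖x k‖ ≤ c₀ * N (x k) := hc₀ (x k)
    _ ≤ max c₀ 0 * N (x k) := mul_le_mul_of_nonneg_right (le_max_left _ _) (hNnonneg _)
    _ ≤ max c₀ 0 * M := mul_le_mul_of_nonneg_left (hgeom k) (le_max_right _ _)
end

section
/- Let A_1,…,A_K ∈ ℝ^{n×n} and suppose there exists a symmetric positive definite matrix P ∈ ℝ^{n×n} such that P − A_iᵀ P A_i is positive definite for every i ∈ {1,…,K}. Then for every sequence of validity vectors (α_k)_{k∈ℕ} and every initial state x_0 ∈ ℝ^n, the sequence defined by x_{k+1} = (Σ_{i=1}^K α_{k,i} A_i) · x_k converges to 0 as k → ∞. -/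
open Matrix Finset Filter

noncomputable section

def qf {n : ℕ} (Q : Matrix (Fin n) (Fin n) ℝ) (x : Fin n → ℝ) : ℝ := x ⬝ᵥ Q *ᵥ x

lemma qf_continuous {n : ℕ} (Q : Matrix (Fin n) (Fin n) ℝ) : Continuous (qf Q) := by
  have h : qf Q = fun x => ∑ i, ∑ j, x i * (Q i j * x j) := by
    funext x
    simp [qf, Matrix.mulVec, dotProduct, Finset.mul_sum]
  rw [h]
  exact continuous_finset_sum _ fun i _ => continuous_finset_sum _ fun j _ =>
    (continuous_apply i).mul (continuous_const.mul (continuous_apply j))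

lemma qf_smul {n : ℕ} (Q : Matrix (Fin n) (Fin n) ℝ) (t : ℝ) (x : Fin n → ℝ) :
    qf Q (t • x) = t ^ 2 * qf Q x := by
  simp [qf, smul_dotProduct, Matrix.mulVec_smul, dotProduct_smul, sq, mul_assoc]

lemma unit_decomp {n : ℕ} (x : Fin n → ℝ) (hx0 : x ≠ 0) :
    ‖x‖⁻¹ • x ∈ Metric.sphere (0 : Fin n → ℝ) 1 ∧ x = ‖x‖ • (‖x‖⁻¹ • x) := by
  have hnx : ‖x‖ ≠ 0 := norm_ne_zero_iff.mpr hx0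
  constructor
  · simp [norm_smul, abs_of_nonneg (inv_nonneg.mpr (norm_nonneg x)), inv_mul_cancel₀ hnx]
  · rw [smul_smul, mul_inv_cancel₀ hnx, one_smul]

lemma qf_lower {n : ℕ} (hn : 0 < n) (Q : Matrix (Fin n) (Fin n) ℝ) (hQ : Q.PosDef) :
    ∃ c > 0, ∀ x : Fin n → ℝ, c * ‖x‖ ^ 2 ≤ qf Q x := by
  have : Nonempty (Fin n) := ⟨⟨0, hn⟩⟩
  have hS : IsCompact (Metric.sphere (0 : Fin n → ℝ) 1) := isCompact_sphere 0 1
  have hne : (Metric.sphere (0 : Fin n → ℝ) 1).Nonempty := by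
    refine ⟨fun _ => 1, ?_⟩
    simp [pi_norm_const]
  obtain ⟨y, hy, hmin⟩ := hS.exists_isMinOn hne (qf_continuous Q).continuousOn
  have hy0 : y ≠ 0 := by
    intro h
    rw [h] at hy; simp at hy
  refine ⟨qf Q y, by simpa only [qf, star_trivial] using hQ.dotProduct_mulVec_pos hy0, fun x => ?_⟩
  rcases eq_or_ne x 0 with rfl | hx0
  · simp [qf]
  · obtain ⟨hu, hdec⟩ := unit_decomp x hx0
    have h1 : qf Q y ≤ qf Q (‖x‖⁻¹ • x) := hmin hu
    have h2 : qf Q x = ‖x‖ ^ 2 * qf Q (‖x‖⁻¹ • x) := by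
      conv_lhs => rw [hdec, qf_smul]
    nlinarith [sq_nonneg ‖x‖]

lemma qf_upper {n : ℕ} (Q : Matrix (Fin n) (Fin n) ℝ) :
    ∃ C > 0, ∀ x : Fin n → ℝ, qf Q x ≤ C * ‖x‖ ^ 2 := by
  rcases Nat.eq_zero_or_pos n with rfl | hn
  · exact ⟨1, one_pos, fun x => by simp [qf, dotProduct]⟩
  have : Nonempty (Fin n) := ⟨⟨0, hn⟩⟩
  have hS : IsCompact (Metric.sphere (0 : Fin n → ℝ) 1) := isCompact_sphere 0 1
  have hne : (Metric.sphere (0 : Fin n → ℝ) 1).Nonempty := by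
    refine ⟨fun _ => 1, ?_⟩
    simp [pi_norm_const]
  obtain ⟨y, _, hmax⟩ := hS.exists_isMaxOn hne (qf_continuous Q).continuousOn
  refine ⟨max (qf Q y) 1, lt_of_lt_of_le one_pos (le_max_right _ _), fun x => ?_⟩
  rcases eq_or_ne x 0 with rfl | hx0
  · simp [qf]
  · obtain ⟨hu, hdec⟩ := unit_decomp x hx0
    have h1 : qf Q (‖x‖⁻¹ • x) ≤ max (qf Q y) 1 :=
      le_trans (hmax hu) (le_max_left _ _)
    have h2 : qf Q x = ‖x‖ ^ 2 * qf Q (‖x‖⁻¹ • x) := by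
      conv_lhs => rw [hdec, qf_smul]
    nlinarith [sq_nonneg ‖x‖]

lemma dp_sum_left {n K : ℕ} (c : Fin K → ℝ) (y : Fin K → Fin n → ℝ) (w : Fin n → ℝ) :
    (∑ i, c i • y i) ⬝ᵥ w = ∑ i, c i * (y i ⬝ᵥ w) := by
  simp only [dotProduct, Finset.sum_apply, Pi.smul_apply, smul_eq_mul,
    Finset.sum_mul, Finset.mul_sum, mul_assoc]
  exact Finset.sum_comm

lemma dp_sum_right {n K : ℕ} (u : Fin n → ℝ) (w : Fin K → Fin n → ℝ) :
    u ⬝ᵥ (∑ j, w j) = ∑ j, u ⬝ᵥ w j := by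
  simp only [dotProduct, Finset.sum_apply, Finset.mul_sum]
  exact Finset.sum_comm

lemma mulVec_sum_smul {n K : ℕ} (P : Matrix (Fin n) (Fin n) ℝ) (c : Fin K → ℝ)
    (y : Fin K → Fin n → ℝ) :
    P *ᵥ (∑ i, c i • y i) = ∑ i, c i • (P *ᵥ y i) := by
  rw [← Matrix.mulVecLin_apply, map_sum]
  simp [Matrix.mulVecLin_apply, Matrix.mulVec_smul]

lemma sum_smul_mulVec {n K : ℕ} (A : Fin K → Matrix (Fin n) (Fin n) ℝ) (c : Fin K → ℝ)
    (v : Fin n → ℝ) :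
    (∑ i, c i • A i) *ᵥ v = ∑ i, c i • (A i *ᵥ v) := by
  ext j
  simp only [Matrix.mulVec, dotProduct, Finset.sum_apply, Pi.smul_apply,
    Matrix.sum_apply, Matrix.smul_apply, smul_eq_mul, Finset.sum_mul, Finset.mul_sum, mul_assoc]
  rw [Finset.sum_comm]

lemma dp_symm {n : ℕ} {P : Matrix (Fin n) (Fin n) ℝ} (hP : P.IsHermitian)
    (u v : Fin n → ℝ) : u ⬝ᵥ P *ᵥ v = v ⬝ᵥ P *ᵥ u := by
  have hPt : Pᵀ = P := hP
  rw [Matrix.dotProduct_mulVec]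
  rw [show u ᵥ* P = P *ᵥ u from by rw [← hPt, Matrix.vecMul_transpose, hPt]]
  rw [dotProduct_comm]

lemma dp_cross {n : ℕ} {P : Matrix (Fin n) (Fin n) ℝ} (hP : P.PosSemidef)
    (u v : Fin n → ℝ) : u ⬝ᵥ P *ᵥ v ≤ (qf P u + qf P v) / 2 := by
  have h0 : 0 ≤ qf P (u - v) := by simpa only [qf, star_trivial] using hP.dotProduct_mulVec_nonneg (u - v)
  have hexp : qf P (u - v) = qf P u - u ⬝ᵥ P *ᵥ v - v ⬝ᵥ P *ᵥ u + qf P v := by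
    simp [qf, Matrix.mulVec_sub, sub_dotProduct, dotProduct_sub]
    ring
  have hs := dp_symm hP.1 u v
  linarith [hexp ▸ h0]

lemma qf_conj {n : ℕ} (P A : Matrix (Fin n) (Fin n) ℝ) (v : Fin n → ℝ) :
    qf (Aᵀ * P * A) v = qf P (A *ᵥ v) := by
  rw [qf, qf, ← Matrix.mulVec_mulVec, ← Matrix.mulVec_mulVec,
    Matrix.dotProduct_mulVec v Aᵀ, Matrix.vecMul_transpose]

/-- Global asymptotic stability of a Takagi–Sugeno fuzzy system with a common quadratic
Lyapunov function: if `P ≻ 0` and `P - Aᵢᵀ P Aᵢ ≻ 0` for all `i`, then every trajectory of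
`x_{k+1} = (∑ᵢ α_{k,i} Aᵢ) x_k` with validity vectors `α_k` converges to `0`. -/
theorem fuzzy_system_gas (n K : ℕ)
    (A : Fin K → Matrix (Fin n) (Fin n) ℝ)
    (P : Matrix (Fin n) (Fin n) ℝ) (hP : P.PosDef)
    (hLyap : ∀ i : Fin K, (P - (A i)ᵀ * P * A i).PosDef)
    (α : ℕ → Fin K → ℝ) (hα : ∀ k, IsValidity (α k))
    (x : ℕ → Fin n → ℝ)
    (hx : ∀ k, x (k + 1) = (∑ i, α k i • A i).mulVec (x k)) :
    Tendsto x atTop (nhds 0) := by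
  rcases Nat.eq_zero_or_pos n with rfl | hn
  · have hx0 : x = fun _ => 0 := funext fun k => Subsingleton.elim _ _
    rw [hx0]
    exact tendsto_const_nhds
  rcases Nat.eq_zero_or_pos K with rfl | hK
  · exfalso
    have := (hα 0).1
    simpa using this
  obtain ⟨C, hC, hCub⟩ := qf_upper P
  have hc : ∀ i, ∃ c > 0, ∀ v, c * ‖v‖ ^ 2 ≤ qf (P - (A i)ᵀ * P * A i) v :=
    fun i => qf_lower hn _ (hLyap i)
  choose c hcpos hclb using hc
  have hKne : (Finset.univ : Finset (Fin K)).Nonempty := ⟨⟨0, hK⟩, Finset.mem_univ _⟩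
  set ρ : ℝ := max (Finset.univ.sup' hKne fun i => 1 - c i / C) 0 with hρdef
  have hρ0 : 0 ≤ ρ := le_max_right _ _
  have hρ1 : ρ < 1 := by
    apply max_lt _ one_pos
    rw [Finset.sup'_lt_iff]
    intro i _
    have h1 := hcpos i
    rw [sub_lt_self_iff]
    exact div_pos h1 hC
  have hstep_i : ∀ (i : Fin K) (v : Fin n → ℝ), qf P (A i *ᵥ v) ≤ ρ * qf P v := by
    intro i v
    have h1 : c i * ‖v‖ ^ 2 ≤ qf (P - (A i)ᵀ * P * A i) v := hclb i v
    have h2 : qf (P - (A i)ᵀ * P * A i) v = qf P v - qf P (A i *ᵥ v) := by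
      rw [← qf_conj P (A i) v]
      simp [qf, Matrix.sub_mulVec, dotProduct_sub]
    have h3 : qf P v ≤ C * ‖v‖ ^ 2 := hCub v
    have h4 : 1 - c i / C ≤ ρ :=
      le_trans (Finset.le_sup' (fun i => 1 - c i / C) (Finset.mem_univ i)) (le_max_left _ _)
    have h5 : 0 ≤ qf P v := by simpa only [qf, star_trivial] using hP.posSemidef.dotProduct_mulVec_nonneg v
    have h6 : (c i / C) * qf P v ≤ c i * ‖v‖ ^ 2 := by
      calc (c i / C) * qf P v ≤ (c i / C) * (C * ‖v‖ ^ 2) := by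
            exact mul_le_mul_of_nonneg_left h3 (le_of_lt (div_pos (hcpos i) hC))
        _ = c i * ‖v‖ ^ 2 := by
            field_simp
    have h7 : (1 - c i / C) * qf P v ≤ ρ * qf P v := mul_le_mul_of_nonneg_right h4 h5
    nlinarith
  have hdecay : ∀ k, qf P (x (k + 1)) ≤ ρ * qf P (x k) := by
    intro k
    have ha1 : ∑ i, α k i = 1 := (hα k).1
    have ha0 : ∀ i, 0 ≤ α k i := fun i => ((hα k).2 i).1
    set a : Fin K → ℝ := α k with ha
    set y : Fin K → Fin n → ℝ := fun i => A i *ᵥ x k with hy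
    set B : Fin K → ℝ := fun i => qf P (y i) with hB
    set S : ℝ := ∑ j, a j * B j with hS
    have hxk : x (k + 1) = ∑ i, a i • y i := by rw [hx k, sum_smul_mulVec]
    have hexp : qf P (x (k + 1)) = ∑ i, ∑ j, a i * a j * (y i ⬝ᵥ P *ᵥ y j) := by
      rw [hxk]
      unfold qf
      rw [mulVec_sum_smul, dp_sum_left]
      refine Finset.sum_congr rfl fun i _ => ?_
      rw [dp_sum_right]
      rw [Finset.mul_sum]
      refine Finset.sum_congr rfl fun j _ => ?_
      rw [dotProduct_smul, smul_eq_mul]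
      ring
    have hub : qf P (x (k + 1)) ≤ S := by
      calc qf P (x (k + 1)) = ∑ i, ∑ j, a i * a j * (y i ⬝ᵥ P *ᵥ y j) := hexp
        _ ≤ ∑ i, ∑ j, a i * a j * ((B i + B j) / 2) := by
            refine Finset.sum_le_sum fun i _ => Finset.sum_le_sum fun j _ => ?_
            exact mul_le_mul_of_nonneg_left (dp_cross hP.posSemidef _ _)
              (mul_nonneg (ha0 i) (ha0 j))
        _ = ∑ i, (a i * B i / 2 + a i / 2 * S) := by
            refine Finset.sum_congr rfl fun i _ => ?_
            calc ∑ j, a i * a j * ((B i + B j) / 2)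
                = ∑ j, ((a i * B i / 2) * a j + (a i / 2) * (a j * B j)) :=
                  Finset.sum_congr rfl fun j _ => by ring
              _ = (a i * B i / 2) * (∑ j, a j) + (a i / 2) * (∑ j, a j * B j) := by
                  rw [Finset.sum_add_distrib, ← Finset.mul_sum, ← Finset.mul_sum]
              _ = a i * B i / 2 + a i / 2 * S := by rw [ha1, ← hS]; ring
        _ = (∑ i, a i * B i) / 2 + (∑ i, a i * (S / 2)) := by
            rw [Finset.sum_add_distrib, ← Finset.sum_div]
            congr 1
            exact Finset.sum_congr rfl fun i _ => by ring
        _ = S := by rw [← Finset.sum_mul, ha1, ← hS]; ring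
    have hSle : S ≤ ρ * qf P (x k) := by
      calc S = ∑ i, a i * B i := hS
        _ ≤ ∑ i, a i * (ρ * qf P (x k)) :=
            Finset.sum_le_sum fun i _ => mul_le_mul_of_nonneg_left (hstep_i i (x k)) (ha0 i)
        _ = (∑ i, a i) * (ρ * qf P (x k)) := by rw [← Finset.sum_mul]
        _ = ρ * qf P (x k) := by rw [ha1, one_mul]
    linarith
  have hVk : ∀ k, qf P (x k) ≤ ρ ^ k * qf P (x 0) := by
    intro k
    induction k with
    | zero => simp
    | succ k ih =>
      calc qf P (x (k + 1)) ≤ ρ * qf P (x k) := hdecay k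
        _ ≤ ρ * (ρ ^ k * qf P (x 0)) := mul_le_mul_of_nonneg_left ih hρ0
        _ = ρ ^ (k + 1) * qf P (x 0) := by ring
  obtain ⟨c₀, hc₀, hlb⟩ := qf_lower hn P hP
  have hV0 : Tendsto (fun k => qf P (x k)) atTop (nhds 0) := by
    apply squeeze_zero (fun k => by simpa only [qf, star_trivial] using hP.posSemidef.dotProduct_mulVec_nonneg (x k)) hVk
    have := (tendsto_pow_atTop_nhds_zero_of_lt_one hρ0 hρ1).mul_const (qf P (x 0))
    simpa using this
  have hnorm : Tendsto (fun k => ‖x k‖) atTop (nhds 0) := by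
    apply squeeze_zero (g := fun k => Real.sqrt (qf P (x k) / c₀)) (fun k => norm_nonneg _)
    · intro k
      have h1 : ‖x k‖ ^ 2 ≤ qf P (x k) / c₀ := by
        rw [le_div_iff₀ hc₀]
        linarith [hlb (x k)]
      calc ‖x k‖ = Real.sqrt (‖x k‖ ^ 2) := (Real.sqrt_sq (norm_nonneg _)).symm
        _ ≤ Real.sqrt (qf P (x k) / c₀) := Real.sqrt_le_sqrt h1
    · have h2 : Tendsto (fun k => qf P (x k) / c₀) atTop (nhds 0) := by
        simpa using hV0.div_const c₀
      have h3 := (Real.continuous_sqrt.tendsto 0).comp h2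
      simpa [Function.comp_def] using h3
  rw [tendsto_zero_iff_norm_tendsto_zero]
  exact hnorm
end
end

section
/- For all real numbers a₁, a₂, b₂ with b₂ ≠ 0 and |a₁| > 1, there exist a bounded sequence (v_k)_{k∈ℕ} in ℝ and a sequence (u_k)_{k∈ℕ} in ℝ satisfying the controller recurrence b₂·u_{k+2} + a₁·b₂·u_{k+1} = v_{k+3} − (a₁² + a₂)·v_{k+1} − a₁·a₂·v_k for all k ∈ ℕ, such that (u_k) is unbounded; in fact one may take v ≡ 0 and any u with u_1 ≠ 0 and u_{k+2} = −a₁·u_{k+1} for all k, for which |u_k| → ∞. -/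
open Filter

lemma aux_tendsto (a1 : ℝ) (ha1 : 1 < |a1|) (u : ℕ → ℝ) (hu1 : u 1 ≠ 0)
    (hrec : ∀ k, u (k + 2) = -a1 * u (k + 1)) :
    Tendsto (fun k => |u k|) atTop atTop := by
  have h : ∀ k, |u (k + 1)| = |a1| ^ k * |u 1| := by
    intro k
    induction k with
    | zero => simp
    | succ n ih =>
      have := hrec n
      rw [show n + 1 + 1 = n + 2 from rfl, this, abs_mul, abs_neg, ih, pow_succ]
      ring
  have h1 : Tendsto (fun k => |a1| ^ k * |u 1|) atTop atTop :=
    (tendsto_pow_atTop_atTop_of_one_lt ha1).atTop_mul_const (abs_pos.mpr hu1)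
  have h2 : Tendsto (fun k => |u (k + 1)|) atTop atTop :=
    h1.congr fun k => (h k).symm
  exact (tendsto_add_atTop_iff_nat 1).mp h2

/-- Counterexample: for `|a₁| > 1` and `b₂ ≠ 0`, the feedforward controller given by the
recurrence `b₂·u_{k+2} + a₁·b₂·u_{k+1} = v_{k+3} − (a₁² + a₂)·v_{k+1} − a₁·a₂·v_k` is not
BIBO stable: there is a bounded input `v` with an unbounded solution `u`; in fact one may
take `v ≡ 0` and any `u` with `u₁ ≠ 0` and `u_{k+2} = −a₁·u_{k+1}`, for which `|u_k| → ∞`. -/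
theorem controller_counterexample (a1 a2 b2 : ℝ) (hb2 : b2 ≠ 0) (ha1 : 1 < |a1|) :
    (∃ v u : ℕ → ℝ,
      (∃ C : ℝ, ∀ k, |v k| ≤ C) ∧
      (∀ k, b2 * u (k + 2) + a1 * b2 * u (k + 1)
          = v (k + 3) - (a1 ^ 2 + a2) * v (k + 1) - a1 * a2 * v k) ∧
      ¬ ∃ C : ℝ, ∀ k, |u k| ≤ C) ∧
    (∀ u : ℕ → ℝ, u 1 ≠ 0 → (∀ k, u (k + 2) = -a1 * u (k + 1)) →
      (∀ k, b2 * u (k + 2) + a1 * b2 * u (k + 1)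
          = (0 : ℝ) - (a1 ^ 2 + a2) * 0 - a1 * a2 * 0) ∧
      Tendsto (fun k => |u k|) atTop atTop) := by
  constructor
  · refine ⟨fun _ => 0, fun k => (-a1) ^ (k - 1), ⟨0, fun k => by simp⟩, ?_, ?_⟩
    · intro k
      show b2 * (-a1) ^ (k + 2 - 1) + a1 * b2 * (-a1) ^ (k + 1 - 1)
          = 0 - (a1 ^ 2 + a2) * 0 - a1 * a2 * 0
      rw [show (k + 2 : ℕ) - 1 = (k + 1 - 1) + 1 from rfl, pow_succ]
      ring
    · intro ⟨C, hC⟩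
      have hrec : ∀ k, (fun k => (-a1 : ℝ) ^ (k - 1)) (k + 2)
          = -a1 * (fun k => (-a1 : ℝ) ^ (k - 1)) (k + 1) := by
        intro k
        show (-a1 : ℝ) ^ (k + 2 - 1) = -a1 * (-a1) ^ (k + 1 - 1)
        rw [show (k + 2 : ℕ) - 1 = (k + 1 - 1) + 1 from rfl, pow_succ]; ring
      have hu1 : (fun k => (-a1 : ℝ) ^ (k - 1)) 1 ≠ 0 := by
        simp
      have := aux_tendsto a1 ha1 (fun k => (-a1) ^ (k - 1)) hu1 hrec
      obtain ⟨k, hk⟩ := (this.eventually_gt_atTop C).exists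
      exact absurd (hC k) (not_le.mpr hk)
  · intro u hu1 hrec
    refine ⟨fun k => ?_, aux_tendsto a1 ha1 u hu1 hrec⟩
    rw [hrec k]; ring
end

section
/- Let (A_k)_{k∈ℕ} be matrices in ℝ^{n×n}, (B_k)_{k∈ℕ} vectors in ℝ^n (viewed as n×1 matrices), (o_k)_{k∈ℕ} vectors in ℝ^n, c ∈ ℝ^n, and let (x_k)_{k∈ℕ} in ℝ^n, (u_k)_{k∈ℕ} in ℝ satisfy x_{k+1} = A_k x_k + B_k u_k + o_k and y_k = cᵀ x_k for all k. Fix k ∈ ℕ and δ ≥ 1, and suppose that cᵀ (A_{k+δ−1} ⋯ A_{k+j+1}) B_{k+j} = 0 for every j with 1 ≤ j ≤ δ−1 (where the matrix product over an empty index range is the identity). Then y_{k+δ} = cᵀ (A_{k+δ−1} ⋯ A_k) x_k + cᵀ (A_{k+δ−1} ⋯ A_{k+1}) B_k u_k + Σ_{j=0}^{δ−1} cᵀ (A_{k+δ−1} ⋯ A_{k+j+1}) o_{k+j}. -/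
open Matrix Finset

/-- Ordered product of time-varying matrices: `prodDesc A lo m = A_{lo+m-1} ⋯ A_{lo+1} A_{lo}`,
with the empty product (`m = 0`) equal to the identity. -/
def prodDesc {n : ℕ} (A : ℕ → Matrix (Fin n) (Fin n) ℝ) (lo : ℕ) :
    ℕ → Matrix (Fin n) (Fin n) ℝ
  | 0 => 1
  | m + 1 => A (lo + m) * prodDesc A lo m

lemma myMulVec_sum {n : ℕ} (M : Matrix (Fin n) (Fin n) ℝ) (s : Finset ℕ) (f : ℕ → Fin n → ℝ) :
    M.mulVec (∑ i ∈ s, f i) = ∑ i ∈ s, M.mulVec (f i) := by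
  induction s using Finset.induction with
  | empty => simp
  | insert _ _ h ih => simp [Finset.sum_insert h, Matrix.mulVec_add, ih]

lemma myDot_sum {n : ℕ} (c : Fin n → ℝ) (s : Finset ℕ) (f : ℕ → Fin n → ℝ) :
    c ⬝ᵥ (∑ i ∈ s, f i) = ∑ i ∈ s, c ⬝ᵥ f i := by
  induction s using Finset.induction with
  | empty => simp
  | insert _ _ h ih => simp [Finset.sum_insert h, dotProduct_add, ih]

lemma state_formula (n : ℕ)
    (A : ℕ → Matrix (Fin n) (Fin n) ℝ) (B : ℕ → Fin n → ℝ) (o : ℕ → Fin n → ℝ)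
    (x : ℕ → Fin n → ℝ) (u : ℕ → ℝ)
    (hx : ∀ j, x (j + 1) = (A j).mulVec (x j) + u j • B j + o j)
    (k δ : ℕ) :
    x (k + δ) = (prodDesc A k δ).mulVec (x k)
      + ∑ j ∈ Finset.range δ,
          (prodDesc A (k + j + 1) (δ - 1 - j)).mulVec (u (k+j) • B (k+j) + o (k+j)) := by
  induction δ with
  | zero => simp [prodDesc]
  | succ d ih =>
    have hk : k + (d+1) = (k+d)+1 := by ring
    rw [hk, hx, ih, Finset.sum_range_succ]
    have key : ∀ j ∈ Finset.range d,
        (A (k+d)).mulVec ((prodDesc A (k + j + 1) (d - 1 - j)).mulVec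
          (u (k+j) • B (k+j) + o (k+j)))
        = (prodDesc A (k + j + 1) (d + 1 - 1 - j)).mulVec (u (k+j) • B (k+j) + o (k+j)) := by
      intro j hj
      have hjd : j < d := Finset.mem_range.mp hj
      have h1 : d + 1 - 1 - j = (d - 1 - j) + 1 := by omega
      have h2 : (k + j + 1) + (d - 1 - j) = k + d := by omega
      rw [h1, prodDesc, h2, ← Matrix.mulVec_mulVec]
    have hprod : prodDesc A k (d+1) = A (k+d) * prodDesc A k d := rfl
    rw [hprod, Matrix.mulVec_add, myMulVec_sum, Finset.sum_congr rfl key,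
      ← Matrix.mulVec_mulVec]
    have hlast : prodDesc A (k + d + 1) (d + 1 - 1 - d) = 1 := by
      have : d + 1 - 1 - d = 0 := by omega
      rw [this]; rfl
    rw [hlast, Matrix.one_mulVec]
    abel

/-- Feedback-linearization identity for time-varying affine systems with relative degree `δ`:
if inputs applied after time `k` do not influence the output at time `k+δ`, then
`y_{k+δ} = cᵀ(A_{k+δ−1}⋯A_k)x_k + cᵀ(A_{k+δ−1}⋯A_{k+1})B_k u_k
  + ∑_{j=0}^{δ−1} cᵀ(A_{k+δ−1}⋯A_{k+j+1}) o_{k+j}`. -/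
theorem feedback_linearization_identity (n : ℕ)
    (A : ℕ → Matrix (Fin n) (Fin n) ℝ) (B : ℕ → Fin n → ℝ) (o : ℕ → Fin n → ℝ)
    (c : Fin n → ℝ) (x : ℕ → Fin n → ℝ) (u : ℕ → ℝ) (y : ℕ → ℝ)
    (hx : ∀ j, x (j + 1) = (A j).mulVec (x j) + u j • B j + o j)
    (hy : ∀ j, y j = c ⬝ᵥ x j)
    (k δ : ℕ) (hδ : 1 ≤ δ)
    (hrel : ∀ j, 1 ≤ j → j ≤ δ - 1 →
      c ⬝ᵥ (prodDesc A (k + j + 1) (δ - 1 - j)).mulVec (B (k + j)) = 0) :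
    y (k + δ) = c ⬝ᵥ (prodDesc A k δ).mulVec (x k)
      + (c ⬝ᵥ (prodDesc A (k + 1) (δ - 1)).mulVec (B k)) * u k
      + ∑ j ∈ Finset.range δ,
          c ⬝ᵥ (prodDesc A (k + j + 1) (δ - 1 - j)).mulVec (o (k + j)) := by
  rw [hy, state_formula n A B o x u hx k δ]
  rw [dotProduct_add, myDot_sum, add_assoc]
  congr 1
  have hsplit : ∀ j ∈ Finset.range δ,
      c ⬝ᵥ (prodDesc A (k + j + 1) (δ - 1 - j)).mulVec (u (k+j) • B (k+j) + o (k+j))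
      = (c ⬝ᵥ (prodDesc A (k + j + 1) (δ - 1 - j)).mulVec (B (k+j))) * u (k+j)
        + c ⬝ᵥ (prodDesc A (k + j + 1) (δ - 1 - j)).mulVec (o (k+j)) := by
    intro j _
    rw [Matrix.mulVec_add, dotProduct_add, Matrix.mulVec_smul, dotProduct_smul]
    ring_nf
  rw [Finset.sum_congr rfl hsplit, Finset.sum_add_distrib]
  congr 1
  -- the B-sum reduces to the j = 0 term
  obtain ⟨d, rfl⟩ : ∃ d, δ = d + 1 := ⟨δ - 1, by omega⟩
  rw [Finset.sum_range_succ']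
  have hz : ∀ j ∈ Finset.range d,
      (c ⬝ᵥ (prodDesc A (k + (j+1) + 1) (d + 1 - 1 - (j+1))).mulVec (B (k+(j+1)))) * u (k+(j+1)) = 0 := by
    intro j hj
    have hjd := Finset.mem_range.mp hj
    rw [hrel (j+1) (by omega) (by omega)]
    ring
  rw [Finset.sum_congr rfl hz, Finset.sum_const_zero, zero_add]
  simp
end
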